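/- Let n ≥ 3, let λ be a partition of n−2, let μ and ν be partitions of n−1 and ξ a partition of n, such that each of the diagrams of μ and ν is obtained from that of λ by adding one cell, and the diagram of ξ is obtained from each of the diagrams of μ and ν by adding one cell. Then the endomorphism a = i_{λν} ∘ i_{νξ} ∘ ρ_ξ((n−1 n)) ∘ i_{ξμ} ∘ i_{μλ} of W^λ commutes with ρ_λ(σ) for every permutation σ of {1,…,n} fixing both n−1 and n, and a is a scalar multiple of the identity of W^λ. -/

import Mathlib

noncomputable section

namespace WLE

/-- A filling (bijective labelling of the cells of `μ` by `Fin μ.card`) is *standard* if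
its entries increase strictly along rows and columns. -/
def IsStandard (μ : YoungDiagram) (f : {c : ℕ × ℕ // c ∈ μ.cells} ≃ Fin μ.card) : Prop :=
  ∀ c c' : {c : ℕ × ℕ // c ∈ μ.cells},
    ((c.1.1 = c'.1.1 ∧ c.1.2 < c'.1.2) ∨ (c.1.2 = c'.1.2 ∧ c.1.1 < c'.1.1)) →
      f c < f c'

/-- A standard Young tableau of shape `μ`: a bijection from the cells of `μ` to
`Fin μ.card` (0-indexed entries; the paper's entry `k ∈ {1,…,n}` corresponds to the
value `k − 1 : Fin μ.card`) increasing along rows and columns. -/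
def SYT (μ : YoungDiagram) : Type :=
  {f : {c : ℕ × ℕ // c ∈ μ.cells} ≃ Fin μ.card // IsStandard μ f}

instance (μ : YoungDiagram) : Finite (SYT μ) := by
  have : Finite ({c : ℕ × ℕ // c ∈ μ.cells} ≃ Fin μ.card) :=
    Finite.of_injective (fun f => (f : {c : ℕ × ℕ // c ∈ μ.cells} → Fin μ.card))
      fun f g h => Equiv.coe_fn_injective h
  exact Subtype.finite

noncomputable instance (μ : YoungDiagram) : Fintype (SYT μ) := Fintype.ofFinite _

noncomputable instance (μ : YoungDiagram) : DecidableEq (SYT μ) := Classical.decEq _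

/-- `content T k` is the content `j − i` of the cell (row `i`, column `j`, 0-indexed)
of `T` containing the entry `k`. -/
def content {μ : YoungDiagram} (T : SYT μ) (k : Fin μ.card) : ℤ :=
  ((T.1.symm k).1.2 : ℤ) - ((T.1.symm k).1.1 : ℤ)

/-- The index `k − 1` (in `Fin μ.card`), used to form the adjacent transposition
`(k−1 k)`. -/
def kpred {μ : YoungDiagram} (k : Fin μ.card) : Fin μ.card :=
  ⟨k.val - 1, lt_of_le_of_lt (Nat.sub_le _ _) k.isLt⟩

/-- The filling obtained from `T` by exchanging the entries `k−1` and `k`. -/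
def swapped {μ : YoungDiagram} (k : Fin μ.card) (T : SYT μ) :
    {c : ℕ × ℕ // c ∈ μ.cells} ≃ Fin μ.card :=
  T.1.trans (Equiv.swap (kpred k) k)

/-- The (real) axial distance `d = c_T(k) − c_T(k−1)`. -/
def dval {μ : YoungDiagram} (k : Fin μ.card) (T : SYT μ) : ℝ :=
  ((content T k - content T (kpred k) : ℤ) : ℝ)

noncomputable instance (μ : YoungDiagram) : DecidablePred (IsStandard μ) :=
  fun _ => Classical.propDecidable _

/-- The Young orthogonal form operator `s_k` on `W^μ = EuclideanSpace ℝ (SYT μ)`: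
`s_k e_T = (1/d) e_T + √(1 − 1/d²) e_{(k−1 k)T}`, with `d = c_T(k) − c_T(k−1)` and
`e_{(k−1 k)T} = 0` when the swapped filling is not standard. -/
def youngOp (μ : YoungDiagram) (k : Fin μ.card) :
    EuclideanSpace ℝ (SYT μ) →ₗ[ℝ] EuclideanSpace ℝ (SYT μ) where
  toFun x := WithLp.toLp 2 fun T => (dval k T)⁻¹ * x T +
    Real.sqrt (1 - ((dval k T)⁻¹) ^ 2) *
      (if h : IsStandard μ (swapped k T) then x ⟨swapped k T, h⟩ else 0)
  map_add' x y := by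
    ext T
    by_cases h : IsStandard μ (swapped k T) <;>
      simp [h, PiLp.add_apply, -WithLp.ofLp_add] <;> (try erw [PiLp.add_apply]) <;> ring
  map_smul' c x := by
    ext T
    by_cases h : IsStandard μ (swapped k T) <;>
      simp [h, PiLp.smul_apply, smul_eq_mul, -WithLp.ofLp_smul] <;> (try erw [PiLp.smul_apply, smul_eq_mul]) <;> ring

end WLE

namespace WLE

open scoped RealInnerProductSpace

/-! Write `P = S(S(T,μ),ξ)` and `Q = S(S(U,ν),ξ)`. The `(T, U)` entry of the composite is the
`e_Q`-coefficient of `s_n e_P`. Both `P` and `Q` put `n - 1` and `n` into the two cells of `ξ/λ`: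
in the same order if `μ = ν`, in the opposite order otherwise. In the first case only the diagonal
term `1/d` of `s_n` can contribute, in the second only the term `√(1 - 1/d²)` pairing `Q` with its
swap; either way the entry vanishes unless `U = T`, and `d` depends only on the two cells, not on
`T`. So the composite is a scalar, which commutes with every `ρ_λ(τ)`. -/

abbrev Filling (μ : YoungDiagram) : Type := {c : ℕ × ℕ // c ∈ μ.cells} ≃ Fin μ.card

def Extends {lam mu : YoungDiagram} (h : lam.cells ⊆ mu.cells) (E : Filling mu)
    (T : Filling lam) : Prop :=
  ∀ c (hc : c ∈ lam.cells), (E ⟨c, h hc⟩ : ℕ) = T ⟨c, hc⟩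

theorem SYT.ext_iff {μ : YoungDiagram} {T T' : SYT μ} : T = T' ↔ T.1 = T'.1 :=
  Subtype.ext_iff

def cellContent (c : ℕ × ℕ) : ℤ := c.2 - c.1

theorem kpred_ne_self {μ : YoungDiagram} {k : Fin μ.card} (hk : 1 ≤ (k : ℕ)) : kpred k ≠ k :=
  fun h => by have := congrArg Fin.val h; simp only [kpred] at this; omega

theorem eq_kpred_or_eq_of_le {μ : YoungDiagram} {k v : Fin μ.card} (hk : (k : ℕ) + 1 = μ.card)
    (hv : (k : ℕ) - 1 ≤ v) : v = kpred k ∨ v = k := by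
  have := v.isLt
  rcases Nat.eq_or_lt_of_le hv with hv | hv
  · exact Or.inl (Fin.ext (by simp only [kpred]; omega))
  · exact Or.inr (Fin.ext (by omega))

section Extends

variable {lam mu nu : YoungDiagram} {h : lam.cells ⊆ mu.cells} {E : Filling mu}
  {T : Filling lam}

theorem Extends.trans {h' : mu.cells ⊆ nu.cells} {F : Filling nu} (hE : Extends h E T)
    (hF : Extends h' F E) : Extends (h.trans h') F T :=
  fun c hc => (hF c (h hc)).trans (hE c hc)

theorem Extends.card_le_apply_iff (hE : Extends h E T) {c : ℕ × ℕ} (hc : c ∈ mu.cells) :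
    lam.card ≤ E ⟨c, hc⟩ ↔ c ∉ lam.cells := by
  constructor
  · intro hle hcl
    have := hE c hcl
    have := (T ⟨c, hcl⟩).isLt
    omega
  · intro hcl
    by_contra! hlt
    obtain ⟨⟨c', hc'⟩, hTc'⟩ := T.surjective ⟨_, hlt⟩
    have hval : E ⟨c', h hc'⟩ = E ⟨c, hc⟩ := Fin.ext ((hE c' hc').trans (by rw [hTc']))
    have hcc' : c' = c := congrArg Subtype.val (E.injective hval)
    exact hcl (hcc' ▸ hc')

theorem Extends.apply_eq_card (hcard : mu.card = lam.card + 1) (hE : Extends h E T)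
    {c : ℕ × ℕ} (hc : c ∈ mu.cells) (hcl : c ∉ lam.cells) : (E ⟨c, hc⟩ : ℕ) = lam.card := by
  have := (hE.card_le_apply_iff hc).2 hcl
  have := (E ⟨c, hc⟩).isLt
  omega

theorem Extends.trans_swap (hE : Extends h E T) {a b : Fin mu.card} (ha : lam.card ≤ a)
    (hb : lam.card ≤ b) : Extends h (E.trans (Equiv.swap a b)) T := by
  intro c hc
  have hlt : (E ⟨c, h hc⟩ : ℕ) < lam.card := (hE c hc).symm ▸ (T ⟨c, hc⟩).isLt
  rw [Equiv.trans_apply, Equiv.swap_apply_of_ne_of_ne (Fin.ne_of_lt (by omega))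
    (Fin.ne_of_lt (by omega)), hE c hc]

variable {k : Fin mu.card} (hcard : mu.card = lam.card + 2) (hk : (k : ℕ) = lam.card + 1)
include hcard hk

theorem Extends.eq_iff_of_apply {F : Filling mu} {U : Filling lam} (hE : Extends h E U)
    (hF : Extends h F T) {z₁ z₂ : {c : ℕ × ℕ // c ∈ mu.cells}} (hE₁ : E z₁ = kpred k)
    (hE₂ : E z₂ = k) (hF₁ : F z₁ = kpred k) (hF₂ : F z₂ = k) : E = F ↔ U = T := by
  constructor
  · rintro rfl
    exact Equiv.ext fun c => Fin.ext ((hE c.1 c.2).symm.trans (hF c.1 c.2))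
  · rintro rfl
    refine Equiv.symm_bijective.injective (Equiv.ext fun v => ?_)
    by_cases hv : lam.card ≤ v
    · rcases eq_kpred_or_eq_of_le (by omega) (by omega : (k : ℕ) - 1 ≤ v) with rfl | rfl
      · rw [E.symm_apply_eq.2 hE₁.symm, F.symm_apply_eq.2 hF₁.symm]
      · rw [E.symm_apply_eq.2 hE₂.symm, F.symm_apply_eq.2 hF₂.symm]
    · set c := U.symm ⟨v, by omega⟩
      have hEc : E ⟨c.1, h c.2⟩ = v := Fin.ext ((hE c.1 c.2).trans (by simp [c]))
      have hFc : F ⟨c.1, h c.2⟩ = v := Fin.ext ((hF c.1 c.2).trans (by simp [c]))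
      rw [E.symm_apply_eq.2 hEc.symm, F.symm_apply_eq.2 hFc.symm]

theorem Extends.eq_or_eq_of_card_le {F : Filling mu} {U : Filling lam} (hE : Extends h E U)
    (hF : Extends h F T) {x₁ x₂ : {c : ℕ × ℕ // c ∈ mu.cells}} (hF₁ : F x₁ = kpred k)
    (hF₂ : F x₂ = k) {y : {c : ℕ × ℕ // c ∈ mu.cells}} (hy : lam.card ≤ E y) :
    y = x₁ ∨ y = x₂ := by
  have hFy : lam.card ≤ F y := (hF.card_le_apply_iff y.2).2 ((hE.card_le_apply_iff y.2).1 hy)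
  rcases eq_kpred_or_eq_of_le (by omega) (by omega : (k : ℕ) - 1 ≤ F y) with hv | hv
  · exact Or.inl (F.injective (hv.trans hF₁.symm))
  · exact Or.inr (F.injective (hv.trans hF₂.symm))

end Extends

theorem exists_cells_of_extends_extends {lam mu xi : YoungDiagram} (hsub1 : lam.cells ⊆ mu.cells)
    (hcard1 : mu.card = lam.card + 1) (hsub2 : mu.cells ⊆ xi.cells)
    (hcard2 : xi.card = mu.card + 1) {k : Fin xi.card} (hk : (k : ℕ) = lam.card + 1) :
    ∃ x₁ x₂ : {c : ℕ × ℕ // c ∈ xi.cells}, ∀ {T : Filling lam} {E : Filling mu}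
      {F : Filling xi}, Extends hsub1 E T → Extends hsub2 F E → F x₁ = kpred k ∧ F x₂ = k := by
  obtain ⟨c₁, hc₁, hc₁l⟩ := Finset.exists_mem_notMem_of_card_lt_card (s := lam.cells)
    (t := mu.cells) (by simp only [YoungDiagram.card] at hcard1; omega)
  obtain ⟨c₂, hc₂, hc₂m⟩ := Finset.exists_mem_notMem_of_card_lt_card (s := mu.cells)
    (t := xi.cells) (by simp only [YoungDiagram.card] at hcard2; omega)
  refine ⟨⟨c₁, hsub2 hc₁⟩, ⟨c₂, hc₂⟩, fun hE hF => ⟨Fin.ext ?_, Fin.ext ?_⟩⟩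
  · rw [hF c₁ hc₁, hE.apply_eq_card hcard1 hc₁ hc₁l]
    simp only [kpred]
    omega
  · rw [hF.apply_eq_card hcard2 hc₂ hc₂m, hcard1, hk]

theorem apply_of_inner_adjoint {𝕜 ι κ : Type*} [RCLike 𝕜] [Fintype ι] [Fintype κ]
    [DecidableEq ι] [DecidableEq κ] {f : ι → κ} {i : EuclideanSpace 𝕜 ι →ₗ[𝕜] EuclideanSpace 𝕜 κ}
    (hi : ∀ a, i (EuclideanSpace.single a 1) = EuclideanSpace.single (f a) 1)
    {j : EuclideanSpace 𝕜 κ →ₗ[𝕜] EuclideanSpace 𝕜 ι}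
    (hj : ∀ x y, inner 𝕜 (j x) y = inner 𝕜 x (i y))
    (x : EuclideanSpace 𝕜 κ) (a : ι) : j x a = x (f a) := by
  have := hj x (EuclideanSpace.single a 1)
  simp only [EuclideanSpace.inner_single_right, hi, one_mul] at this
  exact (starRingEnd 𝕜).injective this

theorem eq_smul_id_of_single_apply {𝕜 ι : Type*} [RCLike 𝕜] [Fintype ι] [DecidableEq ι]
    {f : EuclideanSpace 𝕜 ι →ₗ[𝕜] EuclideanSpace 𝕜 ι} {r : 𝕜}
    (hf : ∀ a b, f (EuclideanSpace.single a 1) b = if b = a then r else 0) :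
    f = r • LinearMap.id := by
  refine (EuclideanSpace.basisFun ι 𝕜).toBasis.ext fun a => ?_
  ext b
  simp [hf, PiLp.single_apply]

theorem youngOp_single_apply {μ : YoungDiagram} (k : Fin μ.card) (P Q : SYT μ) :
    youngOp μ k (EuclideanSpace.single P 1) Q =
      (dval k Q)⁻¹ * (if Q = P then 1 else 0) +
        √(1 - (dval k Q)⁻¹ ^ 2) * (if swapped k Q = P.1 then 1 else 0) := by
  simp only [youngOp, LinearMap.coe_mk, AddHom.coe_mk, PiLp.single_apply]
  congr 2
  by_cases hs : IsStandard μ (swapped k Q)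
  · rw [dif_pos hs]
    have hP (S : SYT μ) : EuclideanSpace.single P (1 : ℝ) S = if S.1 = P.1 then 1 else 0 := by
      rw [PiLp.single_apply]
      exact if_congr SYT.ext_iff rfl rfl
    exact hP ⟨swapped k Q, hs⟩
  · rw [dif_neg hs, if_neg]
    rintro hQP
    exact hs (hQP ▸ P.2)

theorem dval_eq_of_apply {μ : YoungDiagram} {k : Fin μ.card} {Q : SYT μ}
    {y₁ y₂ : {c : ℕ × ℕ // c ∈ μ.cells}} (hy₁ : Q.1 y₁ = kpred k) (hy₂ : Q.1 y₂ = k) :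
    dval k Q = ((cellContent y₂ - cellContent y₁ : ℤ) : ℝ) := by
  rw [dval, content, content, (Equiv.symm_apply_eq _).2 hy₁.symm,
    (Equiv.symm_apply_eq _).2 hy₂.symm, cellContent, cellContent]

section YoungOp

variable {lam xi : YoungDiagram} {h : lam.cells ⊆ xi.cells} {k : Fin xi.card}
  (hcard : xi.card = lam.card + 2) (hk : (k : ℕ) = lam.card + 1) {P Q : SYT xi}
  {T U : SYT lam} (hP : Extends h P.1 T.1) (hQ : Extends h Q.1 U.1)
  {x₁ x₂ : {c : ℕ × ℕ // c ∈ xi.cells}} (hP₁ : P.1 x₁ = kpred k) (hP₂ : P.1 x₂ = k)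
include hcard hk hP hQ hP₁ hP₂

theorem youngOp_single_apply_of_extends_of_eq (hQ₁ : Q.1 x₁ = kpred k) (hQ₂ : Q.1 x₂ = k) :
    youngOp xi k (EuclideanSpace.single P 1) Q = if U = T then (dval k Q)⁻¹ else 0 := by
  have hQP : Q = P ↔ U = T := by
    rw [SYT.ext_iff, SYT.ext_iff]
    exact hQ.eq_iff_of_apply hcard hk hP hQ₁ hQ₂ hP₁ hP₂
  have hswap : swapped k Q ≠ P.1 := fun heq => kpred_ne_self (k := k) (by omega) <| by
    rw [← hP₁, ← heq, swapped, Equiv.trans_apply, hQ₁, Equiv.swap_apply_left]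
  rw [youngOp_single_apply]
  by_cases hUT : U = T <;> simp [hQP, hswap, hUT]

theorem youngOp_single_apply_of_extends_of_swap (hQ₁ : Q.1 x₂ = kpred k) (hQ₂ : Q.1 x₁ = k) :
    youngOp xi k (EuclideanSpace.single P 1) Q =
      if U = T then √(1 - (dval k Q)⁻¹ ^ 2) else 0 := by
  have hQP : Q ≠ P := fun heq => kpred_ne_self (k := k) (by omega) (by rw [← hP₁, ← heq, hQ₂])
  have hswap : swapped k Q = P.1 ↔ U = T := by
    rw [SYT.ext_iff]
    refine (hQ.trans_swap (by simp only [kpred]; omega) (by omega)).eq_iff_of_apply hcard hk hP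
      ?_ ?_ hP₁ hP₂
    · rw [Equiv.trans_apply, hQ₂, Equiv.swap_apply_right]
    · rw [Equiv.trans_apply, hQ₁, Equiv.swap_apply_left]
  rw [youngOp_single_apply]
  by_cases hUT : U = T <;> simp [hQP, hswap, hUT]

theorem youngOp_single_apply_of_extends {y₁ y₂ : {c : ℕ × ℕ // c ∈ xi.cells}}
    (hQ₁ : Q.1 y₁ = kpred k) (hQ₂ : Q.1 y₂ = k) :
    youngOp xi k (EuclideanSpace.single P 1) Q =
      if U = T then
        (if y₁ = x₁ then ((cellContent y₂ - cellContent y₁ : ℤ) : ℝ)⁻¹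
          else √(1 - ((cellContent y₂ - cellContent y₁ : ℤ) : ℝ)⁻¹ ^ 2))
      else 0 := by
  have hne : kpred k ≠ k := kpred_ne_self (k := k) (by omega)
  have hkp : (kpred k : ℕ) = lam.card := by simp only [kpred]; omega
  have hcover {y} (hy : lam.card ≤ Q.1 y) : y = x₁ ∨ y = x₂ :=
    hQ.eq_or_eq_of_card_le hcard hk hP hP₁ hP₂ hy
  by_cases h₁ : y₁ = x₁
  · have h₂ : y₂ = x₂ := (hcover (by rw [hQ₂]; omega)).resolve_left fun h₂ =>
      hne (by rw [← hQ₁, ← hQ₂, h₁, h₂])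
    subst h₁ h₂
    rw [youngOp_single_apply_of_extends_of_eq hcard hk hP hQ hP₁ hP₂ hQ₁ hQ₂,
      dval_eq_of_apply hQ₁ hQ₂, if_pos rfl]
  · have h₁' : y₁ = x₂ := (hcover (by rw [hQ₁, hkp])).resolve_left h₁
    have h₂ : y₂ = x₁ := (hcover (by rw [hQ₂]; omega)).resolve_right fun h₂ =>
      hne (by rw [← hQ₁, ← hQ₂, h₁', h₂])
    subst h₁' h₂
    rw [youngOp_single_apply_of_extends_of_swap hcard hk hP hQ hP₁ hP₂ hQ₁ hQ₂,
      dval_eq_of_apply hQ₁ hQ₂, if_neg h₁]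

end YoungOp

/-- Let `n ≥ 3`, let `λ` be a partition of `n−2`, let `μ` and `ν` be
partitions of `n−1` obtained from `λ` by adding one cell, and `ξ` a partition of `n`
obtained from each of `μ` and `ν` by adding one cell.  Then the endomorphism
`a = i_{λν} ∘ i_{νξ} ∘ ρ_ξ((n−1 n)) ∘ i_{ξμ} ∘ i_{μλ}` of `W^λ` commutes with
`ρ_λ(σ)` for every permutation `σ` of `{1,…,n}` fixing `n−1` and `n` (identified
with an element of `S_{n−2}`, i.e. with `ρ_λ(τ)` for every `τ ∈ S_{n−2}`), and `a`
is a scalar multiple of the identity of `W^λ`. -/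
theorem composite_commutes_and_is_scalar (lam mu nu xi : YoungDiagram)
    (hsub1 : lam.cells ⊆ mu.cells) (hcard1 : mu.card = lam.card + 1)
    (hsub1' : lam.cells ⊆ nu.cells) (hcard1' : nu.card = lam.card + 1)
    (hsub2 : mu.cells ⊆ xi.cells) (hcard2 : xi.card = mu.card + 1)
    (hsub2' : nu.cells ⊆ xi.cells) (hcard2' : xi.card = nu.card + 1)
    (ext1 : SYT lam → SYT mu)
    (hext1 : ∀ (T : SYT lam) (c : ℕ × ℕ) (hc : c ∈ lam.cells),
      (((ext1 T).1 ⟨c, hsub1 hc⟩ : Fin mu.card) : ℕ) = ((T.1 ⟨c, hc⟩ : Fin lam.card) : ℕ))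
    (ext2 : SYT mu → SYT xi)
    (hext2 : ∀ (T : SYT mu) (c : ℕ × ℕ) (hc : c ∈ mu.cells),
      (((ext2 T).1 ⟨c, hsub2 hc⟩ : Fin xi.card) : ℕ) = ((T.1 ⟨c, hc⟩ : Fin mu.card) : ℕ))
    (ext1' : SYT lam → SYT nu)
    (hext1' : ∀ (T : SYT lam) (c : ℕ × ℕ) (hc : c ∈ lam.cells),
      (((ext1' T).1 ⟨c, hsub1' hc⟩ : Fin nu.card) : ℕ) = ((T.1 ⟨c, hc⟩ : Fin lam.card) : ℕ))
    (ext2' : SYT nu → SYT xi)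
    (hext2' : ∀ (T : SYT nu) (c : ℕ × ℕ) (hc : c ∈ nu.cells),
      (((ext2' T).1 ⟨c, hsub2' hc⟩ : Fin xi.card) : ℕ) = ((T.1 ⟨c, hc⟩ : Fin nu.card) : ℕ))
    (i1 : EuclideanSpace ℝ (SYT lam) →ₗ[ℝ] EuclideanSpace ℝ (SYT mu))
    (hi1 : ∀ T : SYT lam,
      i1 (EuclideanSpace.single T (1 : ℝ)) = EuclideanSpace.single (ext1 T) (1 : ℝ))
    (i2 : EuclideanSpace ℝ (SYT mu) →ₗ[ℝ] EuclideanSpace ℝ (SYT xi))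
    (hi2 : ∀ T : SYT mu,
      i2 (EuclideanSpace.single T (1 : ℝ)) = EuclideanSpace.single (ext2 T) (1 : ℝ))
    (i1' : EuclideanSpace ℝ (SYT lam) →ₗ[ℝ] EuclideanSpace ℝ (SYT nu))
    (hi1' : ∀ T : SYT lam,
      i1' (EuclideanSpace.single T (1 : ℝ)) = EuclideanSpace.single (ext1' T) (1 : ℝ))
    (i2' : EuclideanSpace ℝ (SYT nu) →ₗ[ℝ] EuclideanSpace ℝ (SYT xi))
    (hi2' : ∀ T : SYT nu,
      i2' (EuclideanSpace.single T (1 : ℝ)) = EuclideanSpace.single (ext2' T) (1 : ℝ))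
    (iadj1' : EuclideanSpace ℝ (SYT nu) →ₗ[ℝ] EuclideanSpace ℝ (SYT lam))
    (hadj1' : ∀ (x : EuclideanSpace ℝ (SYT nu)) (y : EuclideanSpace ℝ (SYT lam)),
      ⟪iadj1' x, y⟫ = ⟪x, i1' y⟫)
    (iadj2' : EuclideanSpace ℝ (SYT xi) →ₗ[ℝ] EuclideanSpace ℝ (SYT nu))
    (hadj2' : ∀ (x : EuclideanSpace ℝ (SYT xi)) (y : EuclideanSpace ℝ (SYT nu)),
      ⟪iadj2' x, y⟫ = ⟪x, i2' y⟫)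
    (ρxi : Equiv.Perm (Fin xi.card) →* (Module.End ℝ (EuclideanSpace ℝ (SYT xi)))ˣ)
    (hρxi : ∀ k : Fin xi.card, 1 ≤ k.val →
      ((ρxi (Equiv.swap (kpred k) k) : Module.End ℝ (EuclideanSpace ℝ (SYT xi)))) =
        youngOp xi k)
    (ρlam : Equiv.Perm (Fin lam.card) →* (Module.End ℝ (EuclideanSpace ℝ (SYT lam)))ˣ) :
    (∀ τ : Equiv.Perm (Fin lam.card),
      (iadj1' ∘ₗ iadj2' ∘ₗ
          ((ρxi (Equiv.swap (kpred (⟨xi.card - 1, by omega⟩ : Fin xi.card))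
              (⟨xi.card - 1, by omega⟩ : Fin xi.card)) :
            Module.End ℝ (EuclideanSpace ℝ (SYT xi)))) ∘ₗ i2 ∘ₗ i1) ∘ₗ
          ((ρlam τ : Module.End ℝ (EuclideanSpace ℝ (SYT lam)))) =
        ((ρlam τ : Module.End ℝ (EuclideanSpace ℝ (SYT lam)))) ∘ₗ
          (iadj1' ∘ₗ iadj2' ∘ₗ
            ((ρxi (Equiv.swap (kpred (⟨xi.card - 1, by omega⟩ : Fin xi.card))
                (⟨xi.card - 1, by omega⟩ : Fin xi.card)) :
              Module.End ℝ (EuclideanSpace ℝ (SYT xi)))) ∘ₗ i2 ∘ₗ i1)) ∧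
    (∃ r : ℝ,
      iadj1' ∘ₗ iadj2' ∘ₗ
          ((ρxi (Equiv.swap (kpred (⟨xi.card - 1, by omega⟩ : Fin xi.card))
              (⟨xi.card - 1, by omega⟩ : Fin xi.card)) :
            Module.End ℝ (EuclideanSpace ℝ (SYT xi)))) ∘ₗ i2 ∘ₗ i1 =
        r • (LinearMap.id : EuclideanSpace ℝ (SYT lam) →ₗ[ℝ] EuclideanSpace ℝ (SYT lam))) := by
  set k : Fin xi.card := ⟨xi.card - 1, by omega⟩
  have hk : (k : ℕ) = lam.card + 1 := by simp only [k]; omega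
  obtain ⟨x₁, x₂, hx⟩ := exists_cells_of_extends_extends hsub1 hcard1 hsub2 hcard2 hk
  obtain ⟨y₁, y₂, hy⟩ := exists_cells_of_extends_extends hsub1' hcard1' hsub2' hcard2' hk
  have hscalar : iadj1' ∘ₗ iadj2' ∘ₗ youngOp xi k ∘ₗ i2 ∘ₗ i1 =
      (if y₁ = x₁ then ((cellContent y₂ - cellContent y₁ : ℤ) : ℝ)⁻¹
        else √(1 - ((cellContent y₂ - cellContent y₁ : ℤ) : ℝ)⁻¹ ^ 2)) • LinearMap.id := by
    refine eq_smul_id_of_single_apply fun T U => ?_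
    have hP := hx (hext1 T) (hext2 (ext1 T))
    have hQ := hy (hext1' U) (hext2' (ext1' U))
    simp only [LinearMap.comp_apply, hi1, hi2, apply_of_inner_adjoint hi1' hadj1',
      apply_of_inner_adjoint hi2' hadj2']
    exact youngOp_single_apply_of_extends (by omega) hk (Extends.trans (hext1 T) (hext2 _))
      (Extends.trans (hext1' U) (hext2' _)) hP.1 hP.2 hQ.1 hQ.2
  rw [hρxi k (by omega), hscalar]
  exact ⟨fun τ => by rw [LinearMap.smul_comp, LinearMap.comp_smul, LinearMap.id_comp,
    LinearMap.comp_id], _, rfl⟩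

end WLE
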